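/- arXiv:math/0310283 — 2 statements merged into one kernel-verified Lean document; each statement's English description precedes it below -/
import Mathlib

section
/- (Wick theorem for the free boson) For any nonempty finite list of nonzero integers m_1, …, m_n, the vacuum expectation value ⟨β_{m_1} ∘ β_{m_2} ∘ ⋯ ∘ β_{m_n}⟩ equals the sum over all perfect matchings M of the index set {1, …, n} of the product ∏_{{i,j}∈M, i<j} c(m_i, m_j), where the contraction c(a, b) equals a if a > 0 and b = −a, and equals 0 otherwise. In particular the vacuum expectation value vanishes when n is odd. -/
open MvPolynomial

/-- `Λ = ℚ[p_1, p_2, …]`, the polynomial ring in countably many variables `p_n`, `n ≥ 1`. -/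
abbrev Lambda : Type := MvPolynomial ℕ+ ℚ

/-- The bosonic operators: `β_n f = p_{-n}·f` for `n < 0`, `β_0 = 0`,
`β_n f = n·∂f/∂p_n` for `n > 0`. -/
noncomputable def beta (n : ℤ) : Module.End ℚ Lambda :=
  if h : n < 0 then
    LinearMap.mulLeft ℚ (X (⟨n.natAbs, Int.natAbs_pos.mpr (by omega)⟩ : ℕ+))
  else if h' : 0 < n then
    (n : ℚ) • (pderiv (⟨n.natAbs, Int.natAbs_pos.mpr (by omega)⟩ : ℕ+)).toLinearMap
  else 0

/-- The vacuum expectation value `⟨A⟩`: the coefficient of the constant monomial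
in `A(1) ∈ Λ`. -/
noncomputable def vev (A : Module.End ℚ Lambda) : ℚ := constantCoeff (A 1)

/-- The contraction `c(a, b)`: equals `a` if `a > 0` and `b = −a`, and `0` otherwise. -/
def contraction (a b : ℤ) : ℚ := if 0 < a ∧ b = -a then (a : ℚ) else 0

/-- A perfect matching of `Fin n`, encoded as a fixed-point-free involutive
permutation: the two-element blocks of the matching are the orbits `{i, f i}`. -/
def IsPerfectMatching {n : ℕ} (f : Equiv.Perm (Fin n)) : Prop :=
  f * f = 1 ∧ ∀ i, f i ≠ i

instance {n : ℕ} : DecidablePred (IsPerfectMatching (n := n)) := fun f =>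
  inferInstanceAs (Decidable (_ ∧ _))

/-!
For `a > 0` the operator `β_a` annihilates `1` and satisfies `[β_a, β_b] = c(a, b)`, while
`⟨β_b A⟩ = 0` for `b < 0`. Commuting the leading `β_{m_1}` (if `m_1 > 0`) through the rest of the
product therefore gives `⟨β_{m_1} ⋯ β_{m_n}⟩ = ∑_j c(m_1, m_j) ⟨∏_{i ∉ {1, j}} β_{m_i}⟩`.
Sorting the perfect matchings by the partner `j` of `1` shows that the matching sum obeys the same
recursion, and a fixed-point-free involution only exists on a set of even size.
-/

theorem MvPolynomial.pderiv_pderiv_comm {σ R : Type*} [CommRing R] (i j : σ)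
    (f : MvPolynomial σ R) : pderiv i (pderiv j f) = pderiv j (pderiv i f) := by
  have h : ⁅pderiv i, pderiv j⁆ = (0 : Derivation R (MvPolynomial σ R) (MvPolynomial σ R)) :=
    derivation_ext fun k => by
      classical
      rw [Derivation.commutator_apply, pderiv_X, pderiv_X]
      simp only [Pi.single_apply]
      split_ifs <;> simp
  rw [← sub_eq_zero, ← Derivation.commutator_apply, h, Derivation.zero_apply]

theorem mul_prod_ofFn_eq_prod_ofFn_mul_add_sum {K A : Type*} [CommSemiring K] [Semiring A]
    [Algebra K A] {x : A} {k : ℕ} (y : Fin (k + 1) → A) (c : Fin (k + 1) → K)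
    (h : ∀ i, x * y i = y i * x + c i • 1) :
    x * (List.ofFn y).prod =
      (List.ofFn y).prod * x + ∑ j, c j • (List.ofFn fun i => y (j.succAbove i)).prod := by
  induction k with
  | zero => simpa using h 0
  | succ k ih =>
    rw [List.ofFn_succ, List.prod_cons, ← mul_assoc, h 0, add_mul, mul_assoc,
      ih (fun i => y i.succ) (fun i => c i.succ) (fun i => h i.succ),
      Fin.sum_univ_succ (n := k + 1)]
    simp only [Fin.succAbove_zero, Fin.succ_succAbove_zero, Fin.succ_succAbove_succ,
      List.ofFn_succ, List.prod_cons, mul_add, Finset.mul_sum, mul_smul_comm, smul_mul_assoc,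
      one_mul, mul_assoc]
    abel

-- `Nat.toPNat` rather than the anonymous constructor of `beta`, which elaborates to a term of type
-- `{n // 0 < n}` instead of `ℕ+` on which the `simp` lemmas about `X` and `pderiv` do not fire.
theorem beta_of_pos {a : ℤ} (ha : 0 < a) :
    beta a = (a : ℚ) • (pderiv (a.natAbs.toPNat (Int.natAbs_pos.mpr ha.ne'))).toLinearMap := by
  rw [beta, dif_neg (by omega), dif_pos ha]
  rfl

theorem beta_of_neg {b : ℤ} (hb : b < 0) :
    beta b = LinearMap.mulLeft ℚ (X (b.natAbs.toPNat (Int.natAbs_pos.mpr hb.ne))) := by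
  rw [beta, dif_pos hb]
  rfl

theorem beta_mul_beta_of_pos {a b : ℤ} (ha : 0 < a) (hb : b ≠ 0) :
    beta a * beta b = beta b * beta a + contraction a b • 1 := by
  refine LinearMap.ext fun f => ?_
  rcases hb.lt_or_gt with hb | hb
  · rw [beta_of_pos ha, beta_of_neg hb]
    by_cases hab : b = -a
    · subst hab
      simp [contraction, ha, smul_add, add_comm]
    · have hidx : b.natAbs.toPNat (Int.natAbs_pos.mpr hb.ne) ≠
          a.natAbs.toPNat (Int.natAbs_pos.mpr ha.ne') := by
        intro h
        have := congrArg PNat.val h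
        change b.natAbs = a.natAbs at this
        omega
      simp [contraction, hab, pderiv_X_of_ne hidx]
  · have hc : contraction a b = 0 := if_neg (by omega)
    simp only [beta_of_pos ha, beta_of_pos hb, hc, zero_smul, add_zero, Algebra.mul_smul_comm,
      Algebra.smul_mul_assoc, LinearMap.smul_apply, Module.End.mul_apply, Derivation.coeFn_coe,
      smul_comm (a : ℚ)]
    rw [pderiv_pderiv_comm]

theorem vev_beta (a : ℤ) : vev (beta a) = 0 := by
  rcases lt_trichotomy a 0 with ha | rfl | ha
  · simp [vev, beta_of_neg ha, constantCoeff_X]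
  · simp [vev, beta]
  · simp [vev, beta_of_pos ha]

theorem vev_beta_mul_of_neg {b : ℤ} (hb : b < 0) (A : Module.End ℚ Lambda) :
    vev (beta b * A) = 0 := by
  simp [vev, beta_of_neg hb, constantCoeff_X]

theorem vev_beta_mul_prod_of_pos {a : ℤ} (ha : 0 < a) {k : ℕ} (v : Fin (k + 1) → ℤ)
    (hv : ∀ i, v i ≠ 0) :
    vev (beta a * (List.ofFn fun i => beta (v i)).prod) =
      ∑ j, contraction a (v j) * vev (List.ofFn fun i => beta (v (j.succAbove i))).prod := by
  rw [mul_prod_ofFn_eq_prod_ofFn_mul_add_sum _ _ fun i => beta_mul_beta_of_pos ha (hv i)]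
  simp [vev, Module.End.mul_apply, beta_of_pos ha]

def matchingSum {α R : Type*} [CommSemiring R] (c : α → α → R) {n : ℕ} (v : Fin n → α) : R :=
  ∑ f ∈ Finset.univ.filter (fun f : Equiv.Perm (Fin n) => IsPerfectMatching f),
    ∏ i ∈ Finset.univ.filter (fun i => i < f i), c (v i) (v (f i))

theorem isPerfectMatching_iff {n : ℕ} {f : Equiv.Perm (Fin n)} :
    IsPerfectMatching f ↔ ∀ i, f (f i) = i ∧ f i ≠ i := by
  simp only [IsPerfectMatching, Equiv.ext_iff, Equiv.Perm.mul_apply, Equiv.Perm.one_apply,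
    forall_and]

namespace IsPerfectMatching

variable {n : ℕ} {f : Equiv.Perm (Fin n)}

theorem apply_apply (hf : IsPerfectMatching f) (i : Fin n) : f (f i) = i :=
  (isPerfectMatching_iff.mp hf i).1

theorem even (hf : IsPerfectMatching f) : Even n := by
  have hsq : f ^ 2 ^ 1 = 1 := by rw [pow_one, sq, hf.1]
  have hsupp : f.support = Finset.univ :=
    Finset.eq_univ_of_forall fun i => Equiv.Perm.mem_support.mpr (hf.2 i)
  have := Equiv.Perm.card_compl_support_modEq hsq
  rw [hsupp, Finset.compl_univ, Finset.card_empty, Fintype.card_fin] at this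
  exact Nat.even_iff.mpr this.symm

end IsPerfectMatching

section matchingSum

variable {α R : Type*} [CommSemiring R] (c : α → α → R)

theorem matchingSum_fin_zero (v : Fin 0 → α) : matchingSum c v = 1 := by
  simp [matchingSum, IsPerfectMatching, Finset.filter_singleton]

theorem matchingSum_eq_zero_of_odd {n : ℕ} (hn : Odd n) (v : Fin n → α) :
    matchingSum c v = 0 := by
  rw [matchingSum, Finset.filter_false_of_mem fun f _ hf => Nat.not_even_iff_odd.mpr hn hf.even,
    Finset.sum_empty]

theorem matchingSum_eq_zero_of_forall_eq_zero {k : ℕ} (v : Fin (k + 1) → α)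
    (h : ∀ a, c (v 0) a = 0) : matchingSum c v = 0 := by
  refine Finset.sum_eq_zero fun f hf => Finset.prod_eq_zero (i := 0) ?_ (h _)
  simpa [Fin.pos_iff_ne_zero] using (Finset.mem_filter.mp hf).2.2 0

end matchingSum

section insertPair

variable {k : ℕ} (j : Fin (k + 1))

def succSuccAbove : Fin k ↪o Fin (k + 2) :=
  (Fin.succAboveOrderEmb j).trans (Fin.succOrderEmb (k + 1))

theorem succSuccAbove_ne_zero (i : Fin k) : succSuccAbove j i ≠ 0 := Fin.succ_ne_zero _

theorem succSuccAbove_ne_succ (i : Fin k) : succSuccAbove j i ≠ j.succ :=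
  fun h => Fin.succAbove_ne j i (Fin.succ_injective _ h)

theorem exists_succSuccAbove_eq {x : Fin (k + 2)} (h0 : x ≠ 0) (hj : x ≠ j.succ) :
    ∃ i, succSuccAbove j i = x := by
  obtain ⟨y, rfl⟩ := Fin.exists_succ_eq.mpr h0
  obtain ⟨i, rfl⟩ := Fin.exists_succAbove_eq (fun h => hj (congrArg Fin.succ h))
  exact ⟨i, rfl⟩

theorem forall_iff_zero_succ_succSuccAbove {P : Fin (k + 2) → Prop} :
    (∀ x, P x) ↔ P 0 ∧ P j.succ ∧ ∀ i, P (succSuccAbove j i) := by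
  refine ⟨fun h => ⟨h 0, h j.succ, fun i => h _⟩, fun ⟨h0, hj, hi⟩ x => ?_⟩
  by_cases hx0 : x = 0
  · exact hx0 ▸ h0
  by_cases hxj : x = j.succ
  · exact hxj ▸ hj
  obtain ⟨i, rfl⟩ := exists_succSuccAbove_eq j hx0 hxj
  exact hi i

noncomputable def insertPair (g : Equiv.Perm (Fin k)) : Equiv.Perm (Fin (k + 2)) :=
  Equiv.swap 0 j.succ * g.viaFintypeEmbedding (succSuccAbove j).toEmbedding

variable (g : Equiv.Perm (Fin k))

theorem insertPair_apply_zero : insertPair j g 0 = j.succ := by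
  rw [insertPair, Equiv.Perm.mul_apply, Equiv.Perm.viaFintypeEmbedding_apply_notMem_range,
    Equiv.swap_apply_left]
  rintro ⟨i, hi⟩
  exact succSuccAbove_ne_zero j i hi

theorem insertPair_apply_succ : insertPair j g j.succ = 0 := by
  rw [insertPair, Equiv.Perm.mul_apply, Equiv.Perm.viaFintypeEmbedding_apply_notMem_range,
    Equiv.swap_apply_right]
  rintro ⟨i, hi⟩
  exact succSuccAbove_ne_succ j i hi

theorem insertPair_apply_succSuccAbove (i : Fin k) :
    insertPair j g (succSuccAbove j i) = succSuccAbove j (g i) := by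
  rw [insertPair, Equiv.Perm.mul_apply, ← RelEmbedding.coe_toEmbedding,
    Equiv.Perm.viaFintypeEmbedding_apply_image]
  exact Equiv.swap_apply_of_ne_of_ne (succSuccAbove_ne_zero j _) (succSuccAbove_ne_succ j _)

theorem insertPair_injective : Function.Injective (insertPair j) := fun g g' h =>
  Equiv.ext fun i => (succSuccAbove j).injective <| by
    rw [← insertPair_apply_succSuccAbove, h, insertPair_apply_succSuccAbove]

theorem isPerfectMatching_insertPair_iff :
    IsPerfectMatching (insertPair j g) ↔ IsPerfectMatching g := by
  simp only [isPerfectMatching_iff, forall_iff_zero_succ_succSuccAbove j,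
    insertPair_apply_zero, insertPair_apply_succ, insertPair_apply_succSuccAbove,
    (succSuccAbove j).eq_iff_eq]
  simp [Fin.succ_ne_zero, (Fin.succ_ne_zero j).symm]

theorem exists_insertPair_eq {f : Equiv.Perm (Fin (k + 2))} (h0 : f 0 = j.succ)
    (hj : f j.succ = 0) : ∃ g, insertPair j g = f := by
  have hmaps : ∀ i, ∃ i', succSuccAbove j i' = f (succSuccAbove j i) := fun i =>
    exists_succSuccAbove_eq j
      (fun h => succSuccAbove_ne_succ j i (f.injective (h.trans hj.symm)))
      (fun h => succSuccAbove_ne_zero j i (f.injective (h.trans h0.symm)))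
  choose g hg using hmaps
  have hinj : Function.Injective g := fun i i' h =>
    (succSuccAbove j).injective (f.injective (by rw [← hg, ← hg, h]))
  refine ⟨Equiv.ofBijective g (Finite.injective_iff_bijective.mp hinj), Equiv.ext ?_⟩
  refine (forall_iff_zero_succ_succSuccAbove j).mpr ⟨?_, ?_, fun i => ?_⟩
  · rw [insertPair_apply_zero, h0]
  · rw [insertPair_apply_succ, hj]
  · rw [insertPair_apply_succSuccAbove, Equiv.ofBijective_apply, hg]

theorem filter_lt_insertPair :
    Finset.univ.filter (fun x => x < insertPair j g x) =
      insert 0 ((Finset.univ.filter fun i => i < g i).map (succSuccAbove j).toEmbedding) := by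
  ext x
  simp only [Finset.mem_filter, Finset.mem_univ, true_and, Finset.mem_insert, Finset.mem_map,
    RelEmbedding.coe_toEmbedding]
  by_cases hx0 : x = 0
  · simp [hx0, insertPair_apply_zero, Fin.succ_pos]
  by_cases hxj : x = j.succ
  · simp [hxj, insertPair_apply_succ, succSuccAbove_ne_succ]
  obtain ⟨i, rfl⟩ := exists_succSuccAbove_eq j hx0 hxj
  simp [insertPair_apply_succSuccAbove, succSuccAbove_ne_zero]

theorem prod_filter_lt_insertPair {R : Type*} [CommMonoid R]
    (w : Fin (k + 2) → Fin (k + 2) → R) :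
    ∏ x ∈ Finset.univ.filter (fun x => x < insertPair j g x), w x (insertPair j g x) =
      w 0 j.succ * ∏ i ∈ Finset.univ.filter (fun i => i < g i),
        w (succSuccAbove j i) (succSuccAbove j (g i)) := by
  rw [filter_lt_insertPair, Finset.prod_insert (by simp [succSuccAbove_ne_zero]),
    insertPair_apply_zero, Finset.prod_map]
  simp [insertPair_apply_succSuccAbove]

end insertPair

theorem filter_isPerfectMatching_apply_zero_eq {k : ℕ} (j : Fin (k + 1)) :
    (Finset.univ.filter fun f : Equiv.Perm (Fin (k + 2)) => IsPerfectMatching f).filter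
        (fun f => f 0 = j.succ) =
      (Finset.univ.filter fun g : Equiv.Perm (Fin k) => IsPerfectMatching g).map
        ⟨insertPair j, insertPair_injective j⟩ := by
  ext f
  simp only [Finset.mem_filter, Finset.mem_univ, true_and, Finset.mem_map,
    Function.Embedding.coeFn_mk]
  constructor
  · rintro ⟨hf, h0⟩
    obtain ⟨g, rfl⟩ := exists_insertPair_eq j h0 (by rw [← h0, hf.apply_apply])
    exact ⟨g, (isPerfectMatching_insertPair_iff j g).mp hf, rfl⟩
  · rintro ⟨g, hg, rfl⟩
    exact ⟨(isPerfectMatching_insertPair_iff j g).mpr hg, insertPair_apply_zero j g⟩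

theorem matchingSum_succ_succ {α R : Type*} [CommSemiring R] (c : α → α → R) {k : ℕ}
    (v : Fin (k + 2) → α) :
    matchingSum c v =
      ∑ j : Fin (k + 1), c (v 0) (v j.succ) * matchingSum c (v ∘ succSuccAbove j) := by
  rw [matchingSum, ← Finset.sum_fiberwise_of_maps_to (g := fun f => f 0) (t := Finset.univ)
    (fun _ _ => Finset.mem_univ _), Fin.sum_univ_succ]
  have hfix : (Finset.univ.filter fun f : Equiv.Perm (Fin (k + 2)) => IsPerfectMatching f).filter
      (fun f => f 0 = 0) = ∅ :=
    Finset.filter_false_of_mem fun f hf => (Finset.mem_filter.mp hf).2.2 0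
  rw [hfix, Finset.sum_empty, zero_add]
  refine Finset.sum_congr rfl fun j _ => ?_
  rw [filter_isPerfectMatching_apply_zero_eq, Finset.sum_map, matchingSum, Finset.mul_sum]
  exact Finset.sum_congr rfl fun g _ => prod_filter_lt_insertPair j g fun x y => c (v x) (v y)

theorem vev_prod_beta_eq_matchingSum :
    ∀ {n : ℕ} (v : Fin n → ℤ), (∀ i, v i ≠ 0) →
      vev (List.ofFn fun i => beta (v i)).prod = matchingSum contraction v
  | 0, v, _ => by simp [vev, matchingSum_fin_zero]
  | 1, v, _ => by simp [vev_beta, matchingSum_eq_zero_of_odd _ odd_one]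
  | k + 2, v, hv => by
    rw [List.ofFn_succ, List.prod_cons]
    rcases (hv 0).lt_or_gt with h | h
    · rw [vev_beta_mul_of_neg h,
        matchingSum_eq_zero_of_forall_eq_zero _ _ fun a => if_neg (by omega)]
    · rw [vev_beta_mul_prod_of_pos h _ fun i => hv i.succ, matchingSum_succ_succ]
      refine Finset.sum_congr rfl fun j _ => ?_
      exact congrArg _ (vev_prod_beta_eq_matchingSum (v ∘ succSuccAbove j) fun i => hv _)

theorem wick_theorem_general {n : ℕ} (m : Fin n → ℤ) (hm : ∀ i, m i ≠ 0) :
    (vev (List.ofFn fun i => beta (m i)).prod =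
      ∑ f ∈ Finset.univ.filter (fun f : Equiv.Perm (Fin n) => IsPerfectMatching f),
        ∏ i ∈ Finset.univ.filter (fun i => i < f i), contraction (m i) (m (f i))) ∧
    (Odd n → vev (List.ofFn fun i => beta (m i)).prod = 0) := by
  rw [vev_prod_beta_eq_matchingSum m hm]
  exact ⟨rfl, fun hn => matchingSum_eq_zero_of_odd _ hn m⟩

/-- Wick's theorem for the free boson: for any nonempty finite list `m_1, …, m_n` of
nonzero integers, `⟨β_{m_1} ∘ ⋯ ∘ β_{m_n}⟩` is the sum over all perfect matchings `M`
of `{1, …, n}` of `∏_{{i,j}∈M, i<j} c(m_i, m_j)`; in particular it vanishes for `n` odd. -/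
theorem wick_theorem {n : ℕ} (hn : 1 ≤ n) (m : Fin n → ℤ) (hm : ∀ i, m i ≠ 0) :
    (vev (List.ofFn fun i => beta (m i)).prod =
      ∑ f ∈ Finset.univ.filter (fun f : Equiv.Perm (Fin n) => IsPerfectMatching f),
        ∏ i ∈ Finset.univ.filter (fun i => i < f i), contraction (m i) (m (f i))) ∧
    (Odd n → vev (List.ofFn fun i => beta (m i)).prod = 0) :=
  wick_theorem_general m hm
end

section
/- For any function c : {1, 2, 3, …} → ℚ, the following identity of formal power series in t over ℚ holds: exp(∑_{n≥1} c_n t^n / n) = ∑_μ (∏_i c_{μ_i}) · t^{|μ|} / z_μ, where the sum on the right is over all partitions μ (including the empty partition, which contributes 1). -/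
/-!
Both sides `E` solve `E' = E · L'` with `E(0) = 1`, where `L = ∑ c_n t^n / n`, and this linear
differential equation has only one power series solution in characteristic zero. For the
exponential this is the chain rule. For the partition sum `B` it is the recursion
`(N + 1) B_{N+1} = ∑_j c_{j+1} B_{N-j}`: write `N + 1 = ∑_a a · m_a(μ)` and remove one part `a`
from `μ`, which turns `a · m_a(μ) · w(μ)` into `c_a · w(μ ∖ a)`.
-/

/-- For a partition (given as the multiset of its parts),
`z_μ = ∏_k k^{m_k}·m_k!` where `m_k` is the number of parts equal to `k`. -/
noncomputable def zPart (μ : Multiset ℕ) : ℚ :=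
  ∏ a ∈ μ.toFinset, ((a : ℚ) ^ μ.count a * (μ.count a).factorial)

/-- The formal exponential of a power series (with zero constant term):
the coefficient of `t^N` in `∑_{m≥0} f^m/m!`; for `f` with zero constant term only
`m ≤ N` contribute. -/
noncomputable def fexp (f : PowerSeries ℚ) : PowerSeries ℚ :=
  PowerSeries.mk fun N =>
    ∑ m ∈ Finset.range (N + 1), (PowerSeries.coeff N (f ^ m)) / m.factorial

open PowerSeries Finset

theorem PowerSeries.coeff_pow_eq_zero_of_lt {R : Type*} [CommSemiring R] {f : R⟦X⟧}
    (hf : constantCoeff f = 0) {n m : ℕ} (h : n < m) : coeff n (f ^ m) = 0 :=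
  coeff_of_lt_order _ <| (Nat.cast_lt.2 h).trans_le (le_order_pow_of_constantCoeff_eq_zero m hf)

theorem fexp_eq_subst_exp {f : ℚ⟦X⟧} (hf : constantCoeff f = 0) :
    fexp f = (exp ℚ).subst f := by
  ext N
  rw [fexp, coeff_mk, coeff_subst' (HasSubst.of_constantCoeff_zero' hf),
    finsum_eq_sum_of_support_subset (s := range (N + 1))]
  · refine sum_congr rfl fun m _ => ?_
    rw [coeff_exp, smul_eq_mul]
    simp [div_eq_inv_mul]
  · intro m hm
    contrapose! hm
    simp [coeff_pow_eq_zero_of_lt hf (by simpa using hm)]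

theorem derivative_fexp {f : ℚ⟦X⟧} (hf : constantCoeff f = 0) :
    d⁄dX ℚ (fexp f) = fexp f * d⁄dX ℚ f := by
  rw [fexp_eq_subst_exp hf, derivative_subst (HasSubst.of_constantCoeff_zero' hf), derivative_exp]

theorem constantCoeff_fexp (f : ℚ⟦X⟧) : constantCoeff (fexp f) = 1 := by
  rw [← coeff_zero_eq_constantCoeff_apply]
  simp [fexp]

theorem PowerSeries.eq_of_derivative_eq_mul {R : Type*} [CommRing R] [IsAddTorsionFree R]
    {f g φ : R⟦X⟧} (hf : d⁄dX R f = f * φ) (hg : d⁄dX R g = g * φ)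
    (h₀ : constantCoeff f = constantCoeff g) : f = g := by
  ext n
  induction n using Nat.strong_induction_on with
  | _ n ih =>
    cases n with
    | zero => simpa using h₀
    | succ n =>
      have hcoeff : coeff n (f * φ) = coeff n (g * φ) := by
        rw [coeff_mul, coeff_mul]
        refine sum_congr rfl fun p hp => ?_
        rw [ih p.1 (Nat.antidiagonal.fst_lt hp)]
      rw [← hf, ← hg, coeff_derivative, coeff_derivative] at hcoeff
      exact nsmul_right_injective n.succ_ne_zero (by simpa [nsmul_eq_mul, mul_comm] using hcoeff)

theorem zPart_eq_prod_of_toFinset_subset {s : Multiset ℕ} {T : Finset ℕ} (h : s.toFinset ⊆ T) :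
    zPart s = ∏ b ∈ T, ((b : ℚ) ^ s.count b * (s.count b).factorial) :=
  prod_subset h fun b _ hb => by simp [Multiset.count_eq_zero_of_notMem (by simpa using hb)]

theorem zPart_cons (a : ℕ) (s : Multiset ℕ) :
    zPart (a ::ₘ s) = a * (s.count a + 1) * zPart s := by
  classical
  have hT : s.toFinset ⊆ insert a s.toFinset := subset_insert _ _
  have hfactor : ∀ b : ℕ, ((b : ℚ) ^ (a ::ₘ s).count b * ((a ::ₘ s).count b).factorial) =
      (if b = a then (a : ℚ) * (s.count a + 1) else 1) *
        ((b : ℚ) ^ s.count b * (s.count b).factorial) := by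
    intro b
    split_ifs with hb
    · subst hb
      rw [Multiset.count_cons_self, pow_succ, Nat.factorial_succ]
      push_cast
      ring
    · rw [Multiset.count_cons_of_ne hb, one_mul]
  rw [zPart_eq_prod_of_toFinset_subset hT, zPart, Multiset.toFinset_cons,
    prod_congr rfl fun b _ => hfactor b, prod_mul_distrib, prod_ite_eq', if_pos (mem_insert_self _ _)]

noncomputable def partitionWeight (c : ℕ → ℚ) (s : Multiset ℕ) : ℚ :=
  (s.map c).prod / zPart s

theorem mul_partitionWeight_cons (c : ℕ → ℚ) {a : ℕ} (ha : a ≠ 0) (s : Multiset ℕ) :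
    a * (s.count a + 1) * partitionWeight c (a ::ₘ s) = c a * partitionWeight c s := by
  have hne : (a : ℚ) * (s.count a + 1) ≠ 0 := by positivity
  rw [partitionWeight, partitionWeight, zPart_cons, Multiset.map_cons, Multiset.prod_cons,
    ← mul_div_assoc, mul_div_mul_left _ _ hne, mul_div_assoc]

theorem sum_mul_partitionWeight (c : ℕ → ℚ) {s : Multiset ℕ} (hs : 0 ∉ s) :
    (s.sum : ℚ) * partitionWeight c s = ∑ a ∈ s.toFinset, c a * partitionWeight c (s.erase a) := by
  rw [sum_multiset_count, Nat.cast_sum, sum_mul]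
  refine sum_congr rfl fun a ha => ?_
  obtain ⟨t, rfl⟩ := Multiset.exists_cons_of_mem (Multiset.mem_toFinset.1 ha)
  rw [Multiset.erase_cons_head, Multiset.count_cons_self,
    ← mul_partitionWeight_cons c (ne_of_mem_of_not_mem (Multiset.mem_toFinset.1 ha) hs),
    smul_eq_mul]
  push_cast
  ring

theorem Nat.Partition.sum_filter_mem_parts {M : Type*} [AddCommMonoid M] {n a : ℕ}
    (ha₁ : 1 ≤ a) (ha : a ≤ n) (F : Multiset ℕ → M) :
    ∑ μ : n.Partition with a ∈ μ.parts, F (μ.parts.erase a) =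
      ∑ ν : (n - a).Partition, F ν.parts := by
  rw [sum_subtype _ (p := fun μ : n.Partition => a ∈ μ.parts) (by simp)]
  exact Fintype.sum_equiv (partitionWithPartEquiv ha₁ ha) _ _ fun μ => by simp

theorem Nat.Partition.sum_toFinset_eq_sum_range {M : Type*} [AddCommMonoid M] {n : ℕ}
    (μ : (n + 1).Partition) (g : ℕ → M) :
    ∑ a ∈ μ.parts.toFinset, g a = ∑ j ∈ range (n + 1), if j + 1 ∈ μ.parts then g (j + 1) else 0 := by
  have hsucc : ∀ a ∈ μ.parts, a - 1 + 1 = a := fun a ha => Nat.sub_add_cancel (μ.parts_pos ha)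
  rw [← sum_filter]
  refine sum_nbij' (· - 1) (· + 1) ?_ ?_ ?_ ?_ ?_ <;> intro a ha <;>
    simp only [Multiset.mem_toFinset, mem_filter, mem_range] at ha
  · have := μ.le_of_mem_parts ha
    have := μ.parts_pos ha
    simp only [mem_filter, mem_range, hsucc a ha, ha, and_true]
    omega
  · simpa using ha.2
  · exact hsucc a ha
  · simp
  · rw [hsucc a ha]

theorem Nat.Partition.sum_sum_toFinset_erase {M : Type*} [AddCommMonoid M] (n : ℕ)
    (G : ℕ → Multiset ℕ → M) :
    ∑ μ : (n + 1).Partition, ∑ a ∈ μ.parts.toFinset, G a (μ.parts.erase a) =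
      ∑ j ∈ range (n + 1), ∑ ν : (n - j).Partition, G (j + 1) ν.parts := by
  simp_rw [sum_toFinset_eq_sum_range]
  rw [sum_comm]
  refine sum_congr rfl fun j hj => ?_
  rw [← sum_filter, sum_filter_mem_parts (Nat.le_add_left 1 j) (by simpa using hj),
    Nat.add_sub_add_right]

noncomputable def partitionSeries (c : ℕ → ℚ) : ℚ⟦X⟧ :=
  mk fun N => ∑ μ : N.Partition, partitionWeight c μ.parts

theorem constantCoeff_partitionSeries (c : ℕ → ℚ) : constantCoeff (partitionSeries c) = 1 := by
  rw [← coeff_zero_eq_constantCoeff_apply, partitionSeries, coeff_mk, Fintype.sum_unique]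
  simp [partitionWeight, zPart]

theorem succ_mul_coeff_succ_partitionSeries (c : ℕ → ℚ) (n : ℕ) :
    (n + 1 : ℚ) * coeff (n + 1) (partitionSeries c) =
      ∑ j ∈ range (n + 1), c (j + 1) * coeff (n - j) (partitionSeries c) := by
  calc (n + 1 : ℚ) * coeff (n + 1) (partitionSeries c)
      = ∑ μ : (n + 1).Partition, (μ.parts.sum : ℚ) * partitionWeight c μ.parts := by
        simp only [partitionSeries, coeff_mk, mul_sum, Nat.Partition.parts_sum, Nat.cast_succ]
    _ = ∑ μ : (n + 1).Partition, ∑ a ∈ μ.parts.toFinset,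
          c a * partitionWeight c (μ.parts.erase a) :=
        sum_congr rfl fun μ _ => sum_mul_partitionWeight c fun h => (μ.parts_pos h).false
    _ = ∑ j ∈ range (n + 1), c (j + 1) * coeff (n - j) (partitionSeries c) := by
        rw [Nat.Partition.sum_sum_toFinset_erase n fun a s => c a * partitionWeight c s]
        simp only [partitionSeries, coeff_mk, mul_sum]

theorem derivative_partitionSeries (c : ℕ → ℚ) :
    d⁄dX ℚ (partitionSeries c) = partitionSeries c * mk fun n => c (n + 1) := by
  ext n
  rw [coeff_derivative, mul_comm, succ_mul_coeff_succ_partitionSeries, mul_comm, coeff_mul,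
    Nat.sum_antidiagonal_eq_sum_range_succ_mk]
  simp only [coeff_mk]

theorem derivative_mk_div (c : ℕ → ℚ) :
    d⁄dX ℚ (mk fun n => if n = 0 then 0 else c n / n) = mk fun n => c (n + 1) := by
  ext n
  rw [coeff_derivative, coeff_mk, coeff_mk, if_neg n.succ_ne_zero, Nat.cast_succ]
  field_simp

/-- `exp(∑_{n≥1} c_n t^n/n) = ∑_μ (∏_i c_{μ_i}) t^{|μ|}/z_μ`, the sum on the right
being over all partitions `μ` (the coefficient of `t^N` is a sum over the finitely
many partitions of `N`; the empty partition contributes `1`). -/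
theorem exp_sum_eq_sum_partitions (c : ℕ → ℚ) :
    fexp (PowerSeries.mk fun n => if n = 0 then 0 else c n / n) =
      PowerSeries.mk fun N =>
        ∑ μ : Nat.Partition N, (μ.parts.map c).prod / zPart μ.parts := by
  have hlog : constantCoeff (mk fun n => if n = 0 then 0 else c n / n : ℚ⟦X⟧) = 0 := by
    simp [← coeff_zero_eq_constantCoeff_apply]
  change _ = partitionSeries c
  refine eq_of_derivative_eq_mul (derivative_fexp hlog) ?_ ?_
  · rw [derivative_mk_div]
    exact derivative_partitionSeries c
  · rw [constantCoeff_fexp, constantCoeff_partitionSeries]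
end
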